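/- A polynomial function f : ℕ → ℕ with coefficients in ℕ ∪ {0} (mapping positive naturals to positive naturals) is continuous as a map from the Macías space M(ℕ) to itself if and only if f has the form f(x) = a·x^n for some a ∈ ℕ and n ∈ ℕ ∪ {0}. -/

import Mathlib

open Topology

/-- For `n` a positive natural, `σ_n = {m ∈ ℕ⁺ : gcd(n,m) = 1}`. -/
def sigmaSet (n : ℕ+) : Set ℕ+ := {m : ℕ+ | Nat.Coprime (n : ℕ) (m : ℕ)}

/-- The Macías topology `τ_M` on the positive naturals, generated by the sets `σ_n`. -/
def tauM : TopologicalSpace ℕ+ :=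
  TopologicalSpace.generateFrom (Set.range sigmaSet)

/-- `f : ℕ⁺ → ℕ⁺` is a polynomial function with coefficients in `ℕ ∪ {0}`. -/
def IsPolyFun (f : ℕ+ → ℕ+) : Prop :=
  ∃ (n : ℕ) (a : ℕ → ℕ),
    ∀ x : ℕ+, (f x : ℕ) = ∑ k ∈ Finset.range (n + 1), a k * (x : ℕ) ^ k

/-!
Since `σ_a ∩ σ_b = σ_{ab}`, the neighbourhoods of `1` in `M(ℕ)` are exactly the sets containing
some `σ_N`. If a polynomial `f` is continuous and `p` is a prime with `p ∤ f 1`, then `f⁻¹' σ_p`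
contains some `σ_N`; every residue class `x ≢ 0 (mod p)` meets `σ_N`, and `f x mod p` depends
only on `x mod p`, so `p ∤ f x` whenever `p ∤ x`. Writing `f x = x^n (c + x g(x))` with `c > 0`,
at `x = c² f(1)` we get `f x = x^n c (1 + c f(1) g(x))`, and any prime factor of the last
factor divides `f x` but neither `x` nor `f 1`; hence `g = 0`. Conversely the preimage of `σ_N`
under `x ↦ a xⁿ` is `∅`, `ℕ⁺` or `σ_N`.
-/

open Finset

theorem sum_range_eq_pow_mul {R : Type*} [CommSemiring R] {a : ℕ → R} {n : ℕ}
    (hlow : ∀ k < n, a k = 0) (e : ℕ) (x : R) :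
    ∑ k ∈ range (n + 1 + e), a k * x ^ k =
      x ^ n * (a n + x * ∑ i ∈ range e, a (n + 1 + i) * x ^ i) := by
  rw [sum_range_add, sum_range_succ,
    sum_eq_zero fun k hk => by rw [hlow k (mem_range.1 hk), zero_mul], zero_add, mul_add,
    mul_sum, mul_sum]
  congr 1
  · ring
  · refine sum_congr rfl fun i _ => ?_
    ring

theorem sigmaSet_mul (a b : ℕ+) : sigmaSet (a * b) = sigmaSet a ∩ sigmaSet b := by
  ext m
  simp [sigmaSet, Nat.coprime_mul_iff_left]

theorem isOpen_sigmaSet (n : ℕ+) : IsOpen[tauM] (sigmaSet n) :=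
  .basic _ ⟨n, rfl⟩

theorem exists_sigmaSet_subset_of_one_mem {U : Set ℕ+} (hU : IsOpen[tauM] U) (h1 : 1 ∈ U) :
    ∃ N, sigmaSet N ⊆ U := by
  induction hU with
  | basic s hs => obtain ⟨N, rfl⟩ := hs; exact ⟨N, subset_rfl⟩
  | univ => exact ⟨1, Set.subset_univ _⟩
  | inter s t _ _ ihs iht =>
    obtain ⟨M, hM⟩ := ihs h1.1
    obtain ⟨N, hN⟩ := iht h1.2
    exact ⟨M * N, sigmaSet_mul M N ▸ Set.inter_subset_inter hM hN⟩
  | sUnion S _ ih =>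
    obtain ⟨s, hsS, h1s⟩ := h1
    obtain ⟨N, hN⟩ := ih s hsS h1s
    exact ⟨N, hN.trans (Set.subset_sUnion_of_mem hsS)⟩

theorem exists_mem_sigmaSet_modEq (N : ℕ+) {p x : ℕ} (hp : p.Prime) (hx : Nat.Coprime p x) :
    ∃ y ∈ sigmaSet N, (y : ℕ) ≡ x [MOD p] := by
  obtain ⟨y, hyx, hy1⟩ := Nat.chineseRemainder (Nat.coprime_ordCompl hp N.ne_zero) x 1
  have hpy : Nat.Coprime p y := by
    rw [Nat.coprime_comm, Nat.Coprime, hyx.gcd_eq]; exact hx.symm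
  have hy : Nat.Coprime (ordCompl[p] N) y := by
    rw [Nat.coprime_comm, Nat.Coprime, hy1.gcd_eq, Nat.gcd_one_left]
  have hy0 : 0 < y :=
    Nat.pos_of_ne_zero fun h => hp.one_lt.ne' (Nat.coprime_zero_right _ |>.1 (h ▸ hpy))
  refine ⟨⟨y, hy0⟩, ?_, hyx⟩
  show Nat.Coprime N y
  rw [← Nat.ordProj_mul_ordCompl_eq_self (N : ℕ) p]
  exact (hpy.pow_left _).mul_left hy

theorem IsPolyFun.modEq {f : ℕ+ → ℕ+} (hf : IsPolyFun f) {p : ℕ} {x y : ℕ+}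
    (h : (x : ℕ) ≡ y [MOD p]) : (f x : ℕ) ≡ f y [MOD p] := by
  obtain ⟨d, a, ha⟩ := hf
  rw [ha, ha]
  gcongr

theorem IsPolyFun.sigmaSet_subset_preimage {f : ℕ+ → ℕ+} (hf : IsPolyFun f)
    (hcont : Continuous[tauM, tauM] f) {p : ℕ+} (hp : (p : ℕ).Prime) (h1 : f 1 ∈ sigmaSet p) :
    sigmaSet p ⊆ f ⁻¹' sigmaSet p := by
  obtain ⟨N, hN⟩ :=
    exists_sigmaSet_subset_of_one_mem (continuous_def.1 hcont _ (isOpen_sigmaSet p)) h1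
  intro x hx
  obtain ⟨y, hyN, hyx⟩ := exists_mem_sigmaSet_modEq N hp hx
  have hfy : Nat.Coprime p (f y) := hN hyN
  show Nat.Coprime p (f x)
  rw [Nat.coprime_comm, Nat.Coprime, ← (hf.modEq hyx).gcd_eq]
  exact hfy.symm

theorem continuous_monomial (a : ℕ+) (n : ℕ) :
    Continuous[tauM, tauM] fun x : ℕ+ => a * x ^ n := by
  refine continuous_generateFrom_iff.2 ?_
  rintro _ ⟨N, rfl⟩
  have : (fun x : ℕ+ => a * x ^ n) ⁻¹' sigmaSet N =
      {_x | Nat.Coprime N a} ∩ ({_x | n = 0} ∪ sigmaSet N) := by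
    ext x
    simp only [Set.mem_preimage, sigmaSet, Set.mem_ofPred_eq, Set.mem_inter_iff, Set.mem_union,
      PNat.mul_coe, PNat.pow_coe, Nat.coprime_mul_iff_right]
    rcases n.eq_zero_or_pos with rfl | hn
    · simp
    · simp [Nat.coprime_pow_right_iff hn, hn.ne']
  rw [this]
  let _ : TopologicalSpace ℕ+ := tauM
  exact isOpen_const.inter (isOpen_const.union (isOpen_sigmaSet N))

theorem IsPolyFun.exists_eq_pow_mul {f : ℕ+ → ℕ+} (hf : IsPolyFun f) :
    ∃ (n : ℕ) (c : ℕ+) (e : ℕ) (b : ℕ → ℕ),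
      ∀ x : ℕ+, (f x : ℕ) = x ^ n * (c + x * ∑ i ∈ range e, b i * (x : ℕ) ^ i) := by
  obtain ⟨d, a, ha⟩ := hf
  have hex : ∃ k ≤ d, a k ≠ 0 := by
    by_contra! h
    have h1 := ha 1
    rw [sum_eq_zero fun k hk => by rw [h k (Nat.lt_succ_iff.1 (mem_range.1 hk)), zero_mul]] at h1
    exact (f 1).ne_zero h1
  obtain ⟨k, hkd, hk⟩ := hex
  have hex' : ∃ k, a k ≠ 0 := ⟨k, hk⟩
  obtain ⟨e, hd⟩ := Nat.exists_eq_add_of_le ((Nat.find_min' hex' hk).trans hkd)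
  refine ⟨Nat.find hex', ⟨a (Nat.find hex'), Nat.pos_of_ne_zero (Nat.find_spec hex')⟩, e,
    fun i => a (Nat.find hex' + 1 + i), fun x => ?_⟩
  rw [ha, hd, PNat.mk_coe, add_right_comm,
    sum_range_eq_pow_mul fun k hk => not_not.1 (Nat.find_min hex' hk)]

theorem IsPolyFun.eq_zero_of_continuous {f : ℕ+ → ℕ+} (hf : IsPolyFun f)
    (hcont : Continuous[tauM, tauM] f) {n c : ℕ} {g : ℕ → ℕ} (hc : 0 < c)
    (hfg : ∀ x : ℕ+, (f x : ℕ) = x ^ n * (c + x * g x)) : g (c * c * f 1) = 0 := by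
  set F : ℕ := (f 1 : ℕ)
  set x : ℕ+ := ⟨c * c * F, by positivity⟩
  by_contra hg
  obtain ⟨p, hp, hpm⟩ := Nat.exists_prime_and_dvd (n := 1 + c * F * g x) (by
    have : 0 < c * F * g x := by positivity
    omega)
  have hcF : Nat.Coprime p (c * F) := Nat.Coprime.coprime_dvd_left hpm <| by
    rw [Nat.coprime_add_mul_left_left]; exact Nat.coprime_one_left _
  have hfx : (f x : ℕ) = x ^ n * c * (1 + c * F * g x) := by
    rw [hfg]; simp only [x, PNat.mk_coe]; ring
  have hpc := (Nat.coprime_mul_iff_right.1 hcF).1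
  have hpF := (Nat.coprime_mul_iff_right.1 hcF).2
  have hx : x ∈ sigmaSet ⟨p, hp.pos⟩ := by
    show Nat.Coprime p (c * c * F)
    rw [mul_assoc]; exact hpc.mul_right hcF
  have hpfx : Nat.Coprime p (f x) :=
    hf.sigmaSet_subset_preimage hcont (p := ⟨p, hp.pos⟩) hp hpF hx
  exact hp.coprime_iff_not_dvd.1 hpfx (hfx ▸ dvd_mul_of_dvd_right hpm _)

theorem poly_continuous_iff_monomial (f : ℕ+ → ℕ+) (hf : IsPolyFun f) :
    Continuous[tauM, tauM] f ↔ ∃ (a : ℕ+) (n : ℕ), ∀ x : ℕ+, f x = a * x ^ n := by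
  constructor
  · intro hcont
    obtain ⟨n, c, e, b, hfb⟩ := hf.exists_eq_pow_mul
    have hb : ∀ i ∈ range e, b i = 0 := by
      have h0 := hf.eq_zero_of_continuous hcont (g := fun y => ∑ i ∈ range e, b i * y ^ i)
        c.pos hfb
      rw [sum_eq_zero_iff] at h0
      exact fun i hi => (mul_eq_zero.1 (h0 i hi)).resolve_right (by positivity)
    refine ⟨c, n, fun x => ?_⟩
    rw [← PNat.coe_inj, PNat.mul_coe, PNat.pow_coe, hfb,
      sum_eq_zero fun i hi => by rw [hb i hi, zero_mul], mul_zero, add_zero, mul_comm]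
  · rintro ⟨a, n, hmono⟩
    simpa only [← funext hmono] using continuous_monomial a n
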